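/- arXiv:math/0507375 — 4 statements merged into one kernel-verified Lean document; each statement's English description precedes it below -/
import Mathlib

section
/- Let G be a finite simple graph and F a graph with v(F) < v(G). Then the number of induced subgraphs of G isomorphic to F equals (1/(v(G)-v(F))) times the sum over all vertices u of G of the number of induced subgraphs of G-u isomorphic to F. (Kelly's Lemma, induced version) -/
open SimpleGraph

/-- Iso between a doubly-induced subgraph and the induced subgraph on the image. -/
noncomputable def isoAux {V : Type} (G : SimpleGraph V) (T : Set V) (S : Set T) :
    (G.induce T).induce S ≃g G.induce (Subtype.val '' S) where
  toEquiv := Equiv.Set.image Subtype.val S Subtype.val_injective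
  map_rel_iff' := Iff.rfl

def setCongrIso {V : Type} (G : SimpleGraph V) {A B : Set V} (h : A = B) :
    G.induce A ≃g G.induce B where
  toEquiv := Equiv.setCongr h
  map_rel_iff' := Iff.rfl

noncomputable def indCount {V W : Type} [Fintype V] [Fintype W]
    (G : SimpleGraph V) (F : SimpleGraph W) : ℕ :=
  Nat.card {S : Set V // Nonempty ((G.induce S) ≃g F)}

lemma indCount_induce {V W : Type} [Fintype V] [Fintype W]
    (G : SimpleGraph V) (F : SimpleGraph W) (T : Set V) [Fintype T] :
    indCount (G.induce T) F
      = Nat.card {S : Set V // S ⊆ T ∧ Nonempty ((G.induce S) ≃g F)} := by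
  apply Nat.card_congr
  refine ⟨fun S => ⟨Subtype.val '' S.1, ?_, S.2.map fun e => (isoAux G T S.1).symm.trans e⟩,
    fun S => ⟨Subtype.val ⁻¹' S.1, ?_⟩, ?_, ?_⟩
  · rintro x ⟨a, -, rfl⟩; exact a.2
  · have heq : Subtype.val '' (Subtype.val ⁻¹' S.1 : Set T) = S.1 := by
      rw [Subtype.image_preimage_coe]
      exact Set.inter_eq_right.mpr S.2.1
    exact S.2.2.map fun e => (isoAux G T _).trans ((setCongrIso G heq).trans e)
  · intro S
    ext x
    simp [Set.preimage_image_eq _ Subtype.val_injective]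
  · intro S
    ext x
    simp only [Subtype.image_preimage_coe]
    constructor
    · rintro ⟨-, hx⟩; exact hx
    · intro hx; exact ⟨S.2.1 hx, hx⟩

/-- **Kelly's Lemma** (induced-subgraph version): if `v(F) < v(G)` then
`(v(G) - v(F)) · i(G,F) = Σ_{u ∈ V(G)} i(G-u, F)`. -/
theorem kellys_lemma_induced {V W : Type} [Fintype V] [DecidableEq V] [Fintype W]
    (G : SimpleGraph V) (F : SimpleGraph W) (h : Fintype.card W < Fintype.card V) :
    (Fintype.card V - Fintype.card W) * indCount G F
      = ∑ u : V, indCount (G.induce {v : V | v ≠ u}) F := by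
  classical
  set p : Set V → Prop := fun S => Nonempty ((G.induce S) ≃g F) with hp
  -- each S with p S has card W elements
  have hcard : ∀ S : Set V, p S → S.toFinset.card = Fintype.card W := by
    intro S hS
    obtain ⟨e⟩ := hS
    have := Fintype.card_congr e.toEquiv
    simpa [Set.toFinset_card] using this
  have hL : indCount G F = (Finset.univ.filter p).card := by
    rw [indCount, Nat.card_eq_fintype_card, Fintype.card_subtype]
  have hR : ∀ u : V, indCount (G.induce {v : V | v ≠ u}) F
      = (Finset.univ.filter (fun S : Set V => u ∉ S ∧ p S)).card := by
    intro u
    rw [indCount_induce, Nat.card_eq_fintype_card, Fintype.card_subtype]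
    congr 1
    apply Finset.filter_congr
    intro S _
    simp only [hp]
    constructor
    · rintro ⟨h1, h2⟩; exact ⟨fun hu => h1 hu rfl, h2⟩
    · rintro ⟨h1, h2⟩; exact ⟨fun x hx hxu => h1 (hxu ▸ hx), h2⟩
  rw [hL]
  simp only [hR]
  -- double counting
  have : ∀ u : V, (Finset.univ.filter (fun S : Set V => u ∉ S ∧ p S)).card
      = ∑ S ∈ Finset.univ.filter p, (if u ∉ S then 1 else 0) := by
    intro u
    rw [Finset.card_filter]
    rw [Finset.sum_filter]
    apply Finset.sum_congr rfl
    intro S _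
    by_cases hpS : Nonempty ((G.induce S) ≃g F) <;> by_cases hu : u ∉ S <;>
      simp [p, hpS, hu]
  simp only [this]
  rw [Finset.sum_comm]
  rw [Finset.sum_congr rfl (fun S hS => ?_), Finset.sum_const, smul_eq_mul, mul_comm]
  -- inner sum equals card V - card W
  have hS' := (Finset.mem_filter.mp hS).2
  have : (∑ u : V, if u ∉ S then 1 else 0) = (Finset.univ.filter (fun u => u ∉ S)).card := by
    rw [Finset.card_filter]
  rw [this, Finset.filter_not, Finset.card_sdiff_of_subset (Finset.filter_subset _ _)]
  have h1 : (Finset.univ : Finset V).card = Fintype.card V := Finset.card_univ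
  have h2 : (Finset.univ.filter (fun u => u ∈ S)).card = Fintype.card W := by
    rw [← hcard S hS']
    congr 1
    ext x
    simp
  rw [h1, h2]
end

section
/- Let S = (F_1,...,F_k) be a family of graphs and G a graph. Then the product over i of s(G,F_i) equals the sum over all isomorphism types X of subgraphs of G of c(S,X)·s(G,X), where c(S,X) is the number of k-tuples (X_1,...,X_k) of subgraphs of X with X_i ≅ F_i for all i and union of the X_i equal to X. (Kocay's Lemma) -/
open SimpleGraph

/-- The number of subgraphs of `G` isomorphic to `F`. -/
noncomputable def subCount {V W : Type} [Fintype V] [Fintype W]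
    (G : SimpleGraph V) (F : SimpleGraph W) : ℕ :=
  Nat.card {H : G.Subgraph // Nonempty (H.coe ≃g F)}

/-- `coverCount F X` is the number of `S`-covers of `X` for the family
`S = (F 0, …, F (k-1))`: tuples `(X_1, …, X_k)` of subgraphs of `X` with
`X_i ≅ F_i` for all `i` whose union is all of `X`. -/
noncomputable def coverCount {k : ℕ} {W : Fin k → Type} {U : Type}
    (F : ∀ i, SimpleGraph (W i)) (X : SimpleGraph U) : ℕ :=
  Nat.card {t : ∀ _ : Fin k, X.Subgraph //
    (∀ i, Nonempty ((t i).coe ≃g F i)) ∧ (⨆ i, t i) = (⊤ : X.Subgraph)}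

namespace KocayAux

variable {α : Type*} {G : SimpleGraph α}

instance finiteSubgraph [Finite α] (G : SimpleGraph α) : Finite G.Subgraph :=
  Finite.of_injective (fun H => (H.verts, H.Adj))
    (fun H₁ H₂ h =>
      SimpleGraph.Subgraph.ext (congrArg Prod.fst h) (congrArg Prod.snd h))

lemma map_iSup {β : Type*} {G' : SimpleGraph β} (f : G →g G') {ι : Sort*}
    (t : ι → G.Subgraph) : (⨆ i, t i).map f = ⨆ i, (t i).map f := by
  refine SimpleGraph.Subgraph.ext ?_ ?_
  · simp [Subgraph.verts_iSup, Set.image_iUnion]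
  · ext v w
    simp only [Subgraph.map_adj, Subgraph.iSup_adj, Relation.Map]
    constructor
    · rintro ⟨a, b, ⟨i, h⟩, rfl, rfl⟩
      exact ⟨i, a, b, h, rfl, rfl⟩
    · rintro ⟨i, a, b, h, rfl, rfl⟩
      exact ⟨a, b, ⟨i, h⟩, rfl, rfl⟩

lemma coeSubgraph_top (H : G.Subgraph) :
    Subgraph.coeSubgraph (⊤ : H.coe.Subgraph) = H := by
  refine SimpleGraph.Subgraph.ext ?_ ?_
  · simp
  · ext v w
    rw [Subgraph.coeSubgraph_adj]
    constructor
    · rintro ⟨hv, hw, h⟩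
      exact h
    · intro h
      exact ⟨H.edge_vert h, H.edge_vert h.symm, h⟩

/-- The coercion of a subgraph of a subgraph is isomorphic to the coercion of its
image in the big graph. -/
noncomputable def coeIso {H : G.Subgraph} (T : H.coe.Subgraph) :
    T.coe ≃g (Subgraph.coeSubgraph T).coe where
  toEquiv := Equiv.Set.image Subtype.val T.verts Subtype.val_injective
  map_rel_iff' := by
    intro a b
    constructor
    · rintro ⟨a', b', h, ha, hb⟩
      obtain rfl : a' = ↑a := Subtype.ext ha
      obtain rfl : b' = ↑b := Subtype.ext hb
      exact h
    · intro h
      exact ⟨↑a, ↑b, h, rfl, rfl⟩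

/-- An equality of subgraphs gives an isomorphism of their coercions. -/
def isoOfEq {A B : G.Subgraph} (h : A = B) : A.coe ≃g B.coe := by subst h; exact RelIso.refl _

variable {k : ℕ} {W : Fin k → Type} (F : ∀ i, SimpleGraph (W i))

/-- The fiber of the "union" map over `H` is equivalent to the set of `S`-covers
of `H`. -/
noncomputable def fiberEquiv (H : G.Subgraph) :
    {f : ∀ i, {A : G.Subgraph // Nonempty (A.coe ≃g F i)} // (⨆ i, (f i).1) = H} ≃
    {t : ∀ _ : Fin k, H.coe.Subgraph //
      (∀ i, Nonempty ((t i).coe ≃g F i)) ∧ (⨆ i, t i) = (⊤ : H.coe.Subgraph)} where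
  toFun := fun ⟨f, hf⟩ => by
    have hle : ∀ i, (f i).1 ≤ H := fun i => hf ▸ le_iSup (fun j => (f j).1) i
    have hcoe : ∀ i, Subgraph.coeSubgraph (H.restrict (f i).1) = (f i).1 := fun i => by
      rw [Subgraph.coeSubgraph_restrict_eq]
      exact inf_eq_right.2 (hle i)
    refine ⟨fun i => H.restrict (f i).1, fun i => ?_, ?_⟩
    · obtain ⟨e⟩ := (f i).2
      exact ⟨((coeIso _).trans (isoOfEq (hcoe i))).trans e⟩
    · apply Subgraph.coeSubgraph_injective H
      rw [coeSubgraph_top]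
      show ((⨆ i, H.restrict (f i).1).map H.hom) = H
      rw [map_iSup]
      calc (⨆ i, (H.restrict (f i).1).map H.hom) = ⨆ i, (f i).1 := by
            exact iSup_congr hcoe
        _ = H := hf
  invFun := fun ⟨t, ht1, ht2⟩ => by
    refine ⟨fun i => ⟨Subgraph.coeSubgraph (t i), ?_⟩, ?_⟩
    · obtain ⟨e⟩ := ht1 i
      exact ⟨(coeIso (t i)).symm.trans e⟩
    · calc (⨆ i, Subgraph.coeSubgraph (t i)) = Subgraph.coeSubgraph (⨆ i, t i) :=
            (map_iSup H.hom t).symm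
        _ = H := by rw [ht2]; exact coeSubgraph_top H
  left_inv := by
    rintro ⟨f, hf⟩
    refine Subtype.ext (funext fun i => Subtype.ext ?_)
    show Subgraph.coeSubgraph (H.restrict (f i).1) = (f i).1
    rw [Subgraph.coeSubgraph_restrict_eq]
    exact inf_eq_right.2 (hf ▸ le_iSup (fun j => (f j).1) i)
  right_inv := by
    rintro ⟨t, ht1, ht2⟩
    exact Subtype.ext (funext fun i => Subgraph.restrict_coeSubgraph (t i))

lemma natCard_sigma {ι : Type*} [Finite ι] {β : ι → Type*} [∀ i, Finite (β i)] :
    Nat.card ((i : ι) × β i) = ∑ᶠ i, Nat.card (β i) := by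
  cases nonempty_fintype ι
  letI : ∀ i, Fintype (β i) := fun i => Fintype.ofFinite _
  rw [finsum_eq_sum_of_fintype]
  simp [Nat.card_eq_fintype_card]

end KocayAux

/-- **Kocay's Lemma**: `Π_i s(G, F_i) = Σ_X c(S,X)·s(G,X)`, where the sum
over isomorphism types `X` of subgraphs of `G` is written as the equivalent
sum over all subgraphs `H` of `G` of the number of `S`-covers of `H`. -/
theorem kocays_lemma {V : Type} [Fintype V] {k : ℕ} {W : Fin k → Type}
    [∀ i, Fintype (W i)] (G : SimpleGraph V) (F : ∀ i, SimpleGraph (W i)) :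
    ∏ i, subCount G (F i) = ∑ᶠ H : G.Subgraph, coverCount F H.coe := by
  classical
  have h1 : ∏ i, subCount G (F i) =
      Nat.card (∀ i, {A : G.Subgraph // Nonempty (A.coe ≃g F i)}) :=
    (Nat.card_pi).symm
  rw [h1]
  rw [Nat.card_congr
    (Equiv.sigmaFiberEquiv (fun f : ∀ i, {A : G.Subgraph // Nonempty (A.coe ≃g F i)} =>
      ⨆ i, (f i).1)).symm]
  rw [KocayAux.natCard_sigma]
  exact finsum_congr fun H => Nat.card_congr (KocayAux.fiberEquiv F H)
end

section
/- On the set Λ(G) of isomorphism types of nonempty (edge-containing) induced subgraphs of a graph G, partially ordered by the induced subgraph relation, the function ρ(Λ) = v(Λ) is a rank function: whenever Λ_i covers Λ_j in this poset, v(Λ_i) = v(Λ_j) + 1. -/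
open SimpleGraph

/-- `A` is (isomorphic to) an induced subgraph of `B`. -/
def IsInducedSub {α β : Type} (A : SimpleGraph α) (B : SimpleGraph β) : Prop :=
  ∃ S : Set β, Nonempty ((B.induce S) ≃g A)

/-- Membership of (a representative of) an isomorphism type in `Λ(G)`:
an edge-containing induced subgraph of `G`. -/
def InLambda {V : Type} (G : SimpleGraph V) (p : Σ n : ℕ, SimpleGraph (Fin n)) : Prop :=
  p.2 ≠ ⊥ ∧ IsInducedSub p.2 G

/-!
If `p` embeds in `q` as an induced subgraph without being isomorphic to it, the embedding misses
some vertex `v` of `q`. The subgraph of `q` induced on the image of `p` together with `v` has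
`v(p) + 1` vertices, contains `p`, lies in `q` and hence in `G`, and has an edge because `p` does.
Since `q` covers `p`, this graph is isomorphic to `p` or to `q`; the vertex count rules out `p`.
-/

theorem isInducedSub_iff_nonempty_embedding {α β : Type} {A : SimpleGraph α}
    {B : SimpleGraph β} : IsInducedSub A B ↔ Nonempty (A ↪g B) := by
  constructor
  · rintro ⟨S, ⟨φ⟩⟩
    exact ⟨(Embedding.induce S).comp φ.symm.toEmbedding⟩
  · rintro ⟨f⟩
    refine ⟨Set.range f, ⟨⟨(Equiv.ofInjective f f.injective).symm, ?_⟩⟩⟩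
    rintro ⟨x, a, rfl⟩ ⟨y, b, rfl⟩
    simp only [Equiv.ofInjective_symm_apply, comap_adj, Function.Embedding.coe_subtype]
    exact f.map_adj_iff.symm

namespace SimpleGraph

variable {α β : Type*} {A : SimpleGraph α} {B : SimpleGraph β}

theorem Hom.ne_bot (f : A →g B) (hA : A ≠ ⊥) : B ≠ ⊥ := by
  obtain ⟨a, b, hab⟩ := ne_bot_iff_exists_adj.mp hA
  exact ne_bot_iff_exists_adj.mpr ⟨f a, f b, f.map_adj hab⟩

theorem Embedding.nonempty_iso_of_surjective (f : A ↪g B) (hf : Function.Surjective f) :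
    Nonempty (A ≃g B) :=
  ⟨⟨Equiv.ofBijective f ⟨f.injective, hf⟩, f.map_adj_iff⟩⟩

theorem Embedding.exists_factor_fin_succ {m : ℕ} {A : SimpleGraph (Fin m)} (f : A ↪g B)
    (hf : ¬ Function.Surjective f) :
    ∃ C : SimpleGraph (Fin (m + 1)), Nonempty (A ↪g C) ∧ Nonempty (C ↪g B) := by
  obtain ⟨v, hv⟩ : ∃ v, v ∉ Set.range f := by
    simpa [Function.Surjective, Set.mem_range] using hf
  let g : Fin (m + 1) ↪ β := Fin.Embedding.snoc f.toEmbedding hv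
  refine ⟨B.comap g, ⟨⟨Fin.castSuccEmb, ?_⟩⟩, ⟨Embedding.comap g B⟩⟩
  intro a b
  simp only [comap_adj, Fin.coe_castSuccEmb, g, Fin.Embedding.snoc_castSucc]
  exact f.map_adj_iff

end SimpleGraph

theorem lambda_poset_rank_general {V : Type} (G : SimpleGraph V)
    (p q : Σ n : ℕ, SimpleGraph (Fin n))
    (hp : InLambda G p) (hq : InLambda G q)
    -- `p ≺ q` strictly:
    (hlt : IsInducedSub p.2 q.2 ∧ ¬ Nonempty (p.2 ≃g q.2))
    -- `q` covers `p`: no member of `Λ(G)` lies strictly between them: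
    (hcov : ∀ r : Σ n : ℕ, SimpleGraph (Fin n), InLambda G r →
      IsInducedSub p.2 r.2 → IsInducedSub r.2 q.2 →
      Nonempty (r.2 ≃g p.2) ∨ Nonempty (r.2 ≃g q.2)) :
    q.1 = p.1 + 1 := by
  obtain ⟨f⟩ := isInducedSub_iff_nonempty_embedding.mp hlt.1
  obtain ⟨C, ⟨i⟩, ⟨j⟩⟩ :=
    f.exists_factor_fin_succ fun hsurj ↦ hlt.2 (f.nonempty_iso_of_surjective hsurj)
  obtain ⟨k⟩ := isInducedSub_iff_nonempty_embedding.mp hq.2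
  have hC : InLambda G ⟨p.1 + 1, C⟩ :=
    ⟨i.toHom.ne_bot hp.1, isInducedSub_iff_nonempty_embedding.mpr ⟨k.comp j⟩⟩
  rcases hcov ⟨p.1 + 1, C⟩ hC (isInducedSub_iff_nonempty_embedding.mpr ⟨i⟩)
    (isInducedSub_iff_nonempty_embedding.mpr ⟨j⟩) with hCp | hCq
  · exact absurd (Fin.equiv_iff_eq.mp (hCp.map RelIso.toEquiv)) (Nat.succ_ne_self _)
  · exact (Fin.equiv_iff_eq.mp (hCq.map RelIso.toEquiv)).symm

/-- In the poset `Λ(G)` of isomorphism types of edge-containing induced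
subgraphs of `G` (ordered by the induced-subgraph relation), `ρ(Λ) = v(Λ)` is a
rank function: whenever `q` covers `p`, the number of vertices of `q` is one
more than that of `p`. -/
theorem lambda_poset_rank {V : Type} [Fintype V] (G : SimpleGraph V)
    (p q : Σ n : ℕ, SimpleGraph (Fin n))
    (hp : InLambda G p) (hq : InLambda G q)
    -- `p ≺ q` strictly:
    (hlt : IsInducedSub p.2 q.2 ∧ ¬ Nonempty (p.2 ≃g q.2))
    -- `q` covers `p`: no member of `Λ(G)` lies strictly between them:
    (hcov : ∀ r : Σ n : ℕ, SimpleGraph (Fin n), InLambda G r →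
      IsInducedSub p.2 r.2 → IsInducedSub r.2 q.2 →
      Nonempty (r.2 ≃g p.2) ∨ Nonempty (r.2 ≃g q.2)) :
    q.1 = p.1 + 1 :=
  lambda_poset_rank_general G p q hp hq hlt hcov
end

section
/- For 0 < i < v(G), the coefficient c_i(G) of the characteristic polynomial of G satisfies c_i(G) = (1/(v(G)-i)) Σ_{u ∈ V(G)} c_i(G-u). -/
/-!
Differentiating the Leibniz expansion of `det (X • 1 - M)` term by term, the derivative of
`∏ i, (X • 1 - M) (σ i) i` is the sum over the fixed points `u` of `σ` of the product over
`i ≠ u`; regrouping by `u`, this is the Leibniz expansion of the characteristic polynomial of the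
principal submatrix obtained by deleting `u`. Hence `P'(G) = ∑ u, P(G - u)`, and the coefficient
identity is the coefficient of `λ ^ (v(G) - 1 - i)` on both sides.
-/

open SimpleGraph
open scoped Classical

/-- The characteristic polynomial `P(G;λ) = det(λI - A(G))`. -/
noncomputable def charPolyGraph {V : Type} [Fintype V] (G : SimpleGraph V) :
    Polynomial ℤ :=
  Matrix.charpoly (G.adjMatrix ℤ)

open Polynomial Finset Equiv

namespace Matrix

variable {n R : Type*} [Fintype n] [DecidableEq n] [CommRing R]

theorem derivative_charmatrix_apply (M : Matrix n n R) (i j : n) :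
    derivative (charmatrix M i j) = (1 : Matrix n n R[X]) i j := by
  by_cases h : i = j
  · subst h
    simp only [charmatrix_apply_eq, derivative_sub, derivative_X, derivative_C, sub_zero,
      one_apply_eq]
  · simp only [charmatrix_apply_ne _ _ _ h, derivative_neg, derivative_C, neg_zero,
      one_apply_ne h]

theorem charmatrix_submatrix {m : Type*} [Fintype m] [DecidableEq m] (M : Matrix n n R)
    {f : m → n} (hf : f.Injective) :
    charmatrix (M.submatrix f f) = (charmatrix M).submatrix f f := by
  ext1 i j
  by_cases h : i = j
  · subst h
    simp only [charmatrix_apply_eq, submatrix_apply]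
  · simp only [charmatrix_apply_ne _ _ _ h, charmatrix_apply_ne _ _ _ (hf.ne h), submatrix_apply]

theorem det_submatrix_ne_eq_sum_perm (A : Matrix n n R) (u : n) :
    (A.submatrix ((↑) : {v // v ≠ u} → n) (↑)).det
      = ∑ σ : Perm n, if σ u = u then Perm.sign σ • ∏ i ∈ univ.erase u, A (σ i) i else 0 := by
  rw [← sum_filter, sum_subtype (p := fun σ : Perm n => σ u = u) _ (by simp), det_apply]
  refine Fintype.sum_equiv ((Perm.subtypeEquivSubtypePerm _).trans
    (Equiv.subtypeEquivRight fun σ => by simp)) _ _ fun τ => ?_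
  simp only [Equiv.trans_apply, Equiv.subtypeEquivRight_apply_coe,
    Perm.subtypeEquivSubtypePerm_apply_coe]
  rw [Perm.sign_ofSubtype,
    prod_subtype (univ.erase u) (p := fun v => v ≠ u) (F := inferInstance) (by simp)]
  simp only [submatrix_apply, Perm.ofSubtype_apply_coe]

theorem derivative_charpoly (M : Matrix n n R) :
    derivative M.charpoly = ∑ u : n, (M.submatrix ((↑) : {v // v ≠ u} → n) (↑)).charpoly := by
  simp only [charpoly, charmatrix_submatrix _ Subtype.val_injective, det_submatrix_ne_eq_sum_perm]
  rw [det_apply, map_sum, sum_comm]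
  refine sum_congr rfl fun σ _ => ?_
  rw [Units.smul_def, map_zsmul, derivative_prod_finset, smul_sum]
  simp only [derivative_charmatrix_apply, one_apply, mul_ite, mul_one, mul_zero, smul_ite,
    smul_zero, Units.smul_def]

end Matrix

theorem SimpleGraph.adjMatrix_induce {V R : Type*} [Zero R] [One R] (G : SimpleGraph V)
    [DecidableRel G.Adj] (s : Set V) [DecidableRel (G.induce s).Adj] :
    (G.induce s).adjMatrix R = (G.adjMatrix R).submatrix (↑) (↑) := by
  ext1 a b
  simp only [adjMatrix_apply, comap_adj, Function.Embedding.subtype_apply,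
    Matrix.submatrix_apply]

theorem derivative_charPolyGraph {V : Type} [Fintype V] (G : SimpleGraph V) :
    derivative (charPolyGraph G) = ∑ u : V, charPolyGraph (G.induce {v | v ≠ u}) := by
  rw [charPolyGraph, Matrix.derivative_charpoly]
  refine sum_congr rfl fun u _ => ?_
  rw [charPolyGraph, SimpleGraph.adjMatrix_induce]
  -- the two sides differ only in the `Fintype` and `DecidableEq` instances on the vertex subtype
  convert rfl

theorem coeff_kelly_general {V : Type} [Fintype V] (G : SimpleGraph V)
    (i : ℕ) (hi : i < Fintype.card V) :
    ((Fintype.card V - i : ℕ) : ℤ) * (charPolyGraph G).coeff (Fintype.card V - i)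
      = ∑ u : V, (charPolyGraph (G.induce {v : V | v ≠ u})).coeff
          (Fintype.card V - 1 - i) := by
  have hk : Fintype.card V - 1 - i + 1 = Fintype.card V - i := by omega
  rw [← finsetSum_coeff, ← derivative_charPolyGraph, coeff_derivative, hk, ← Nat.cast_add_one, hk,
    mul_comm]

/-- Writing `P(G;λ) = Σ_i c_i(G) λ^{v(G)-i}`, for `0 < i < v(G)`:
`(v(G) - i) · c_i(G) = Σ_{u ∈ V(G)} c_i(G-u)`, where `c_i(G-u)` is the
coefficient of `λ^{v(G)-1-i}` in `P(G-u;λ)`. -/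
theorem coeff_kelly {V : Type} [Fintype V] (G : SimpleGraph V)
    (i : ℕ) (h0 : 0 < i) (hi : i < Fintype.card V) :
    ((Fintype.card V - i : ℕ) : ℤ) * (charPolyGraph G).coeff (Fintype.card V - i)
      = ∑ u : V, (charPolyGraph (G.induce {v : V | v ≠ u})).coeff
          (Fintype.card V - 1 - i) :=
  coeff_kelly_general G i hi
end
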